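/- Let T be a triangulated category, A a hopfian object and E an exotic object. Then T(E, A) = 0, i.e., every morphism from E to A is zero. -/

import Mathlib

/-
In the exotic triangle `E →2 E →2 E →h ΣE` consecutive maps compose to zero, so `4 • 𝟙 E = 0`,
and by exactness `h = 2 • ψ`. For `f : E ⟶ A`, complete `(f, f)` to a morphism from the exotic
triangle to the Hopf triangle `A →2 A →i C →q ΣA`; its third component `g : E ⟶ C` satisfies
`2 • g = g ≫ q ≫ η ≫ i = h ≫ Σf ≫ η ≫ i = ψ ≫ Σf ≫ (2 • η) ≫ i = 0`. Hence `f ≫ i = 2 • g = 0`,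
so `f` factors through `2 • 𝟙 A`. Dividing by `2` twice gives `f = (4 • 𝟙 E) ≫ e = 0`.
-/

open CategoryTheory Limits Pretriangulated

variable {C : Type*} [Category C] [Preadditive C] [HasZeroObject C]
  [HasShift C ℤ] [∀ n : ℤ, (shiftFunctor C n).Additive] [Pretriangulated C]
  [IsTriangulated C]

/-- A Hopf map for `A`: a morphism `η : ΣA ⟶ A` with `2η = 0` such that for some exact
triangle `A →2 A →i C →q ΣA` one has `iηq = 2·1_C`. -/
def IsHopfMap (A : C) (η : A⟦(1 : ℤ)⟧ ⟶ A) : Prop :=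
  (2 : ℤ) • η = 0 ∧
  ∃ (Cone : C) (i : A ⟶ Cone) (q : Cone ⟶ A⟦(1 : ℤ)⟧),
    Triangle.mk ((2 : ℤ) • 𝟙 A) i q ∈ (distTriang C) ∧
      q ≫ η ≫ i = (2 : ℤ) • 𝟙 Cone

/-- An object admitting a Hopf map. -/
def IsHopfian (A : C) : Prop := ∃ η : A⟦(1 : ℤ)⟧ ⟶ A, IsHopfMap A η

/-- An exotic object: one fitting in an exact triangle `E →2 E →2 E →h ΣE`. -/
def IsExotic (E : C) : Prop :=
  ∃ h : E ⟶ E⟦(1 : ℤ)⟧,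
    Triangle.mk ((2 : ℤ) • 𝟙 E) ((2 : ℤ) • 𝟙 E) h ∈ distTriang C

namespace CategoryTheory.Pretriangulated

open Preadditive

variable {C : Type*} [Category C] [Preadditive C] [HasShift C ℤ]

lemma two_smul_eq_zero_of_comp_eq_two_smul {A Cone : C} {η : A⟦(1 : ℤ)⟧ ⟶ A} {i : A ⟶ Cone}
    {q : Cone ⟶ A⟦(1 : ℤ)⟧} (hη : (2 : ℤ) • η = 0) (hq : q ≫ η ≫ i = (2 : ℤ) • 𝟙 Cone)
    {Y : C} {g : Y ⟶ Cone} {k : Y ⟶ A⟦(1 : ℤ)⟧} (hg : g ≫ q = (2 : ℤ) • k) :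
    (2 : ℤ) • g = 0 :=
  calc (2 : ℤ) • g = g ≫ q ≫ η ≫ i := by rw [hq, comp_zsmul, Category.comp_id]
    _ = k ≫ ((2 : ℤ) • η) ≫ i := by
      rw [← Category.assoc, hg, zsmul_comp, zsmul_comp, comp_zsmul]
    _ = 0 := by rw [hη, zero_comp, comp_zero]

variable [HasZeroObject C] [∀ n : ℤ, (shiftFunctor C n).Additive] [Pretriangulated C]

section ExoticTriangle

variable {E : C} {h : E ⟶ E⟦(1 : ℤ)⟧}
  (hE : Triangle.mk ((2 : ℤ) • 𝟙 E) ((2 : ℤ) • 𝟙 E) h ∈ distTriang C)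
include hE

lemma four_smul_id_eq_zero_of_exotic_triangle : (4 : ℤ) • 𝟙 E = 0 := by
  have h22 : ((2 : ℤ) • 𝟙 E) ≫ ((2 : ℤ) • 𝟙 E) = 0 := comp_distTriang_mor_zero₁₂ _ hE
  rwa [zsmul_comp, Category.id_comp, smul_smul] at h22

lemma exists_eq_two_smul_of_exotic_triangle : ∃ ψ : E ⟶ E⟦(1 : ℤ)⟧, h = (2 : ℤ) • ψ := by
  obtain ⟨(ψ : E ⟶ E⟦(1 : ℤ)⟧), hψ : h = ((2 : ℤ) • 𝟙 E) ≫ ψ⟩ :=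
    Triangle.yoneda_exact₂ _ hE h (comp_distTriang_mor_zero₂₃ _ hE)
  exact ⟨ψ, by rwa [zsmul_comp, Category.id_comp] at hψ⟩

end ExoticTriangle

lemma exists_eq_two_smul_of_exotic_of_hopf {A Cone : C} {η : A⟦(1 : ℤ)⟧ ⟶ A} {i : A ⟶ Cone}
    {q : Cone ⟶ A⟦(1 : ℤ)⟧} (hT : Triangle.mk ((2 : ℤ) • 𝟙 A) i q ∈ distTriang C)
    (hη : (2 : ℤ) • η = 0) (hq : q ≫ η ≫ i = (2 : ℤ) • 𝟙 Cone) {E : C} {h : E ⟶ E⟦(1 : ℤ)⟧}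
    (hE : Triangle.mk ((2 : ℤ) • 𝟙 E) ((2 : ℤ) • 𝟙 E) h ∈ distTriang C) (f : E ⟶ A) :
    ∃ e : E ⟶ A, f = (2 : ℤ) • e := by
  obtain ⟨ψ, rfl⟩ := exists_eq_two_smul_of_exotic_triangle hE
  obtain ⟨(g : E ⟶ Cone), hg₁ : ((2 : ℤ) • 𝟙 E) ≫ g = f ≫ i,
      hg₂ : ((2 : ℤ) • ψ) ≫ f⟦(1 : ℤ)⟧' = g ≫ q⟩ :=
    complete_distinguished_triangle_morphism _ _ hE hT f f
      (show ((2 : ℤ) • 𝟙 E) ≫ f = f ≫ ((2 : ℤ) • 𝟙 A) by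
        rw [zsmul_comp, comp_zsmul, Category.id_comp, Category.comp_id])
  have hg : (2 : ℤ) • g = 0 :=
    two_smul_eq_zero_of_comp_eq_two_smul hη hq (by rw [← hg₂, zsmul_comp])
  obtain ⟨(e : E ⟶ A), he : f = e ≫ ((2 : ℤ) • 𝟙 A)⟩ := Triangle.coyoneda_exact₂ _ hT f
    (show f ≫ i = 0 by rw [← hg₁, zsmul_comp, Category.id_comp, hg])
  exact ⟨e, by rwa [comp_zsmul, Category.comp_id] at he⟩

end CategoryTheory.Pretriangulated

open CategoryTheory.Pretriangulated in
/-- If `A` is hopfian and `E` is exotic, then every morphism `E ⟶ A` is zero. -/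
theorem stmt_11 (A E : C) (hA : IsHopfian A) (hE : IsExotic E) (f : E ⟶ A) : f = 0 := by
  obtain ⟨η, hη, Cone, i, q, hT, hq⟩ := hA
  obtain ⟨h, hE⟩ := hE
  obtain ⟨e, rfl⟩ := exists_eq_two_smul_of_exotic_of_hopf hT hη hq hE f
  obtain ⟨e', rfl⟩ := exists_eq_two_smul_of_exotic_of_hopf hT hη hq hE e
  rw [smul_smul, ← Category.id_comp e', ← Preadditive.zsmul_comp, show (2 * 2 : ℤ) = 4 by norm_num,
    four_smul_id_eq_zero_of_exotic_triangle hE, zero_comp]
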